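/- arXiv:1310.0898 — 2 statements merged into one kernel-verified Lean document; each statement's English description precedes it below -/
import Mathlib

section
/- For any fixed integers a ≥ 3 and b ≥ 1, there are only finitely many positive integers n satisfying σ_a(n) − n^a = b·n, i.e., the sum of the a-th powers of the proper divisors of n equals b·n. -/
/-! If `n > b²` and `n` is composite, its largest proper divisor `d = n / minFac n` satisfies
`d² ≥ n > b²`, so `d^a ≥ d³ ≥ d·n > b·n` once `a ≥ 3`; hence the divisors `d` and `n` alone
already push `σ_a(n)` above `n^a + b·n`. If `n` is prime, `σ_a(n) - n^a = 1 ≠ b·n`. -/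

open ArithmeticFunction
open scoped ArithmeticFunction.sigma

theorem Nat.exists_dvd_lt_le_sq_of_not_prime {n : ℕ} (hn : 1 < n) (hp : ¬n.Prime) :
    ∃ d, d ∣ n ∧ d < n ∧ n ≤ d ^ 2 := by
  have hp2 : 2 ≤ n.minFac := (Nat.minFac_prime hn.ne').two_le
  obtain ⟨d, hnd⟩ := n.minFac_dvd
  have hpd : n.minFac ≤ d := by
    have := Nat.minFac_sq_le_self (by omega) hp
    nlinarith
  refine ⟨d, Dvd.intro_left _ hnd.symm, ?_, ?_⟩ <;> nlinarith

theorem ArithmeticFunction.pow_add_pow_le_sigma {a n d : ℕ} (hn : n ≠ 0) (hd : d ∣ n)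
    (hdn : d ≠ n) : n ^ a + d ^ a ≤ σ a n := by
  rw [sigma_apply, ← Finset.sum_pair (f := (· ^ a)) hdn.symm]
  refine Finset.sum_le_sum_of_subset fun x hx => ?_
  rcases Finset.mem_insert.mp hx with rfl | hx
  · exact Nat.mem_divisors_self x hn
  · exact Nat.mem_divisors.mpr ⟨Finset.mem_singleton.mp hx ▸ hd, hn⟩

theorem ArithmeticFunction.sigma_ne_pow_add_mul {a b n : ℕ} (ha : 3 ≤ a) (hn : 1 < n)
    (hbn : b ^ 2 < n) : σ a n ≠ n ^ a + b * n := by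
  intro h
  by_cases hp : n.Prime
  · rw [sigma_apply, hp.sum_divisors, one_pow] at h
    have := Nat.eq_one_of_mul_eq_one_left (show b * n = 1 by omega)
    omega
  · obtain ⟨d, hd, hdn, hnd⟩ := Nat.exists_dvd_lt_le_sq_of_not_prime hn hp
    have hbd : b < d := (Nat.pow_lt_pow_iff_left two_ne_zero).mp (hbn.trans_le hnd)
    have hσ := pow_add_pow_le_sigma (a := a) (by omega) hd hdn.ne
    have : b * n < d ^ a :=
      calc b * n < d * n := Nat.mul_lt_mul_of_pos_right hbd (by omega)
        _ ≤ d * d ^ 2 := by gcongr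
        _ = d ^ 3 := by ring
        _ ≤ d ^ a := Nat.pow_le_pow_right (by omega) ha
    omega

theorem stmt_4_general (a b : ℕ) (ha : 3 ≤ a) :
    {n : ℕ | 0 < n ∧ ArithmeticFunction.sigma a n = n ^ a + b * n}.Finite := by
  refine (Set.finite_Iic (b ^ 2 + 1)).subset ?_
  rintro n ⟨-, h⟩
  by_contra hn
  rw [Set.mem_Iic, not_le] at hn
  exact sigma_ne_pow_add_mul ha (by omega) (by omega) h

/-- For fixed `a ≥ 3` and `b ≥ 1`, only finitely many positive integers `n`
satisfy `σ_a(n) - n^a = b·n`. -/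
theorem stmt_4 (a b : ℕ) (ha : 3 ≤ a) (hb : 1 ≤ b) :
    {n : ℕ | 0 < n ∧ ArithmeticFunction.sigma a n = n ^ a + b * n}.Finite :=
  stmt_4_general a b ha
end

section
/- 28 does not divide σ₃(28), and 28 is the only even perfect number n for which n does not divide σ₃(n). -/
/-!
By Euclid–Euler an even perfect number is `n = 2^k p` with `p = 2^(k+1) - 1` prime, and
`σ₃ n = σ₃ (2^k) σ₃ p` by multiplicativity. Since `3` is odd, `p + 1 = 2^(k+1)` divides
`σ₃ p = 1 + p³`. Summing the geometric series, `(2³ - 1) σ₃ (2^k) = 2^(3(k+1)) - 1`, which is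
divisible by `2^(k+1) - 1 = p`; so `p ∣ σ₃ (2^k)` unless `p = 7`, i.e. unless `n = 28`.
-/

open ArithmeticFunction Finset
open scoped ArithmeticFunction.sigma

theorem mersenne_mul_sigma_two_pow (r k : ℕ) :
    mersenne r * σ r (2 ^ k) = mersenne ((k + 1) * r) := by
  apply Nat.add_right_cancel (m := 1)
  rw [succ_mersenne, sigma_apply_prime_pow Nat.prime_two, mul_comm, pow_mul']
  simp_rw [pow_mul']
  rw [← succ_mersenne r]
  exact geom_sum_mul_add _ _

theorem sigma_one_two_pow (k : ℕ) : σ 1 (2 ^ k) = mersenne (k + 1) := by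
  simpa [show mersenne 1 = 1 from rfl] using mersenne_mul_sigma_two_pow 1 k

theorem mersenne_dvd_mersenne_mul (a b : ℕ) : mersenne a ∣ mersenne (a * b) := by
  simpa [mersenne, pow_mul] using Nat.sub_dvd_pow_sub_pow (2 ^ a) 1 b

theorem sigma_apply_prime {p : ℕ} (hp : p.Prime) (r : ℕ) : σ r p = 1 + p ^ r := by
  simpa [sum_range_succ] using sigma_apply_prime_pow (k := r) (i := 1) hp

theorem Nat.Prime.add_one_dvd_sigma {p r : ℕ} (hp : p.Prime) (hr : Odd r) : p + 1 ∣ σ r p := by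
  simpa [sigma_apply_prime hp, add_comm] using hr.nat_add_dvd_pow_add_pow p 1

theorem Nat.Perfect.eq_two_pow_mul_mersenne_of_even {n : ℕ} (hn : n.Perfect) (he : Even n) :
    ∃ k, (mersenne (k + 1)).Prime ∧ n = 2 ^ k * mersenne (k + 1) := by
  obtain ⟨k, m, hm, rfl⟩ := Nat.exists_eq_two_pow_mul_odd hn.2.ne'
  have hk : k ≠ 0 := by
    rintro rfl
    exact Nat.not_even_iff_odd.2 hm (by simpa using he)
  have hM : 1 < mersenne (k + 1) := mersenne_lt_mersenne.2 (by omega : 1 < k + 1)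
  have hσ : mersenne (k + 1) * σ 1 m = (mersenne (k + 1) + 1) * m := by
    rw [succ_mersenne, ← sigma_one_two_pow, ← isMultiplicative_sigma.map_mul_of_coprime
      ((Nat.coprime_two_left.2 hm).pow_left k), sigma_one_apply,
      (Nat.perfect_iff_sum_divisors_eq_two_mul hn.2).1 hn, pow_succ]
    ring
  obtain ⟨j, rfl⟩ : mersenne (k + 1) ∣ m :=
    (Nat.coprime_self_add_right.2 (Nat.coprime_one_right _)).dvd_of_dvd_mul_left ⟨_, hσ.symm⟩
  refine ⟨k, ?_⟩
  generalize mersenne (k + 1) = M at *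
  have hj : ∑ x ∈ (M * j).properDivisors, x = j := by
    have h : σ 1 (M * j) = (M + 1) * j :=
      Nat.eq_of_mul_eq_mul_left (n := M) (by omega) (by rw [hσ]; ring)
    rw [sigma_one_apply, Nat.sum_divisors_eq_sum_properDivisors_add_self] at h
    linarith
  have hj0 : j ≠ 0 := by rintro rfl; simp at hm
  rcases Nat.sum_properDivisors_dvd (by rw [hj]; exact dvd_mul_left j M) with h1 | hself
  · obtain rfl : j = 1 := hj ▸ h1
    rw [mul_one] at h1 ⊢
    exact ⟨Nat.sum_properDivisors_eq_one_iff_prime.1 h1, rfl⟩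
  · nlinarith [Nat.pos_of_ne_zero hj0]

theorem two_pow_mul_mersenne_dvd_sigma_three {k : ℕ} (hp : (mersenne (k + 1)).Prime)
    (h7 : mersenne (k + 1) ≠ 7) :
    2 ^ k * mersenne (k + 1) ∣ σ 3 (2 ^ k * mersenne (k + 1)) := by
  have h2 : 2 ^ k ∣ σ 3 (mersenne (k + 1)) :=
    calc 2 ^ k ∣ 2 ^ (k + 1) := pow_dvd_pow 2 k.le_succ
      _ = mersenne (k + 1) + 1 := (succ_mersenne _).symm
      _ ∣ σ 3 (mersenne (k + 1)) := hp.add_one_dvd_sigma (by decide)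
  have hp' : mersenne (k + 1) ∣ σ 3 (2 ^ k) := by
    have h : mersenne (k + 1) ∣ mersenne 3 * σ 3 (2 ^ k) := by
      rw [mersenne_mul_sigma_two_pow]
      exact mersenne_dvd_mersenne_mul _ _
    exact ((Nat.coprime_primes hp (by decide)).2 h7).dvd_of_dvd_mul_left h
  rw [isMultiplicative_sigma.map_mul_of_coprime
    ((Nat.coprime_two_left.2 (mersenne_odd.2 k.succ_ne_zero)).pow_left k), mul_comm (σ 3 _)]
  exact mul_dvd_mul h2 hp'

/-- `28` does not divide `σ₃(28)`, and `28` is the only even perfect number `n`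
with `n ∤ σ₃(n)`. -/
theorem stmt_9 :
    ¬ (28 ∣ ArithmeticFunction.sigma 3 28) ∧
      ∀ n : ℕ, Nat.Perfect n → Even n → ¬ (n ∣ ArithmeticFunction.sigma 3 n) → n = 28 := by
  refine ⟨by rw [sigma_apply]; decide, fun n hn he hndvd => ?_⟩
  obtain ⟨k, hp, rfl⟩ := hn.eq_two_pow_mul_mersenne_of_even he
  by_cases h7 : mersenne (k + 1) = 7
  · obtain rfl : k = 2 := Nat.succ_injective (strictMono_mersenne.injective h7)
    rfl
  · exact absurd (two_pow_mul_mersenne_dvd_sigma_three hp h7) hndvd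
end
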